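/- arXiv:2502.09102 — 4 statements merged into one kernel-verified Lean document; each statement's English description precedes it below -/
import Mathlib

section
/- For every positive integer r, the optimal value of the level-2r Putinar moment relaxation equals the optimal value of the level-r Schmüdgen moment relaxation, i.e. val(P-DGW-2r) = val(S-DGW-r), and both values are at most DGW. -/
open MvPolynomial

/-- The Riesz functional associated to a moment sequence `z`. -/
noncomputable def riesz {σ : Type*} (z : (σ →₀ ℕ) → ℝ) (p : MvPolynomial σ ℝ) : ℝ :=
  ∑ α ∈ p.support, MvPolynomial.coeff α p * z α

/-- The total degree (length) of a multi-index. -/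
def mdeg {σ : Type*} (α : σ →₀ ℕ) : ℕ := α.sum fun _ e => e

/-- Positive semidefiniteness of the truncated localizing matrix `M_t(g z)`:
the associated quadratic form is nonnegative on coefficient vectors of
polynomials of degree at most `t`. -/
def locPSD {σ : Type*} (z : (σ →₀ ℕ) → ℝ) (g : MvPolynomial σ ℝ) (t : ℕ) : Prop :=
  ∀ p : MvPolynomial σ ℝ, p.totalDegree ≤ t → 0 ≤ riesz z (g * p ^ 2)

/-- Vanishing of the truncated localizing matrix `M_t(g z)`: all entries are zero. -/
def locZero {σ : Type*} (z : (σ →₀ ℕ) → ℝ) (g : MvPolynomial σ ℝ) (t : ℕ) : Prop :=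
  ∀ α β : σ →₀ ℕ, mdeg α ≤ t → mdeg β ≤ t →
    riesz z (g * monomial α 1 * monomial β 1) = 0

/-- The row-marginal polynomial `r_i(π) = ∑_j π_{ij} - μ_i`. -/
noncomputable def rowPoly (a b : ℕ) (μ : Fin a → ℝ) (i : Fin a) :
    MvPolynomial (Fin a × Fin b) ℝ :=
  (∑ j, X (i, j)) - C (μ i)

/-- The column-marginal polynomial `c_j(π) = ∑_i π_{ij} - ν_j`. -/
noncomputable def colPoly (a b : ℕ) (ν : Fin b → ℝ) (j : Fin b) :
    MvPolynomial (Fin a × Fin b) ℝ :=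
  (∑ i, X (i, j)) - C (ν j)

/-- The monomial `e_I = ∏_{(i,j) ∈ I} π_{ij}`. -/
noncomputable def eI {a b : ℕ} (I : Finset (Fin a × Fin b)) : MvPolynomial (Fin a × Fin b) ℝ :=
  ∏ q ∈ I, X q

/-- A probability vector: nonnegative entries summing to 1. -/
def IsProbVec {a : ℕ} (μ : Fin a → ℝ) : Prop := (∀ i, 0 ≤ μ i) ∧ ∑ i, μ i = 1

/-- Feasibility for the level-`r` Schmüdgen moment relaxation (S-DGW-r). -/
def SFeas (a b r : ℕ) (μ : Fin a → ℝ) (ν : Fin b → ℝ)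
    (z : ((Fin a × Fin b) →₀ ℕ) → ℝ) : Prop :=
  z 0 = 1 ∧
  (∀ I : Finset (Fin a × Fin b), I.card ≤ 2 * r → locPSD z (eI I) (r - (I.card + 1) / 2)) ∧
  (∀ i, locZero z (rowPoly a b μ i) (r - 1)) ∧
  (∀ j, locZero z (colPoly a b ν j) (r - 1)) ∧
  (∀ i₁ i₂ : Fin a, ∀ j : Fin b, locZero z (rowPoly a b μ i₁ * X (i₂, j)) (r - 1)) ∧
  (∀ j₁ j₂ : Fin b, ∀ i : Fin a, locZero z (colPoly a b ν j₁ * X (i, j₂)) (r - 1))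

/-- The objective of the Schmüdgen moment relaxation. -/
noncomputable def objS (a b : ℕ) (L : Fin a → Fin b → Fin a → Fin b → ℝ)
    (z : ((Fin a × Fin b) →₀ ℕ) → ℝ) : ℝ :=
  ∑ i, ∑ j, ∑ k, ∑ l, L i j k l * z (Finsupp.single (i, j) 1 + Finsupp.single (k, l) 1)

/-- The optimal value of the level-`r` Schmüdgen moment relaxation. -/
noncomputable def valS (a b r : ℕ) (μ : Fin a → ℝ) (ν : Fin b → ℝ)
    (L : Fin a → Fin b → Fin a → Fin b → ℝ) : ℝ :=
  sInf {v : ℝ | ∃ z, SFeas a b r μ ν z ∧ v = objS a b L z}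

/-- Feasibility for the level-`s` Putinar moment relaxation (P-DGW-s), in squared variables. -/
def PFeas (a b s : ℕ) (μ : Fin a → ℝ) (ν : Fin b → ℝ)
    (z : ((Fin a × Fin b) →₀ ℕ) → ℝ) : Prop :=
  z 0 = 1 ∧ locPSD z 1 s ∧
  (∀ i, locZero z (C (μ i) - ∑ j, X (i, j) ^ 2) (s - 1)) ∧
  (∀ j, locZero z (C (ν j) - ∑ i, X (i, j) ^ 2) (s - 1))

/-- The objective of the Putinar moment relaxation. -/
noncomputable def objP (a b : ℕ) (L : Fin a → Fin b → Fin a → Fin b → ℝ)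
    (z : ((Fin a × Fin b) →₀ ℕ) → ℝ) : ℝ :=
  ∑ i, ∑ j, ∑ k, ∑ l, L i j k l * z (Finsupp.single (i, j) 2 + Finsupp.single (k, l) 2)

/-- The optimal value of the level-`s` Putinar moment relaxation. -/
noncomputable def valP (a b s : ℕ) (μ : Fin a → ℝ) (ν : Fin b → ℝ)
    (L : Fin a → Fin b → Fin a → Fin b → ℝ) : ℝ :=
  sInf {v : ℝ | ∃ z, PFeas a b s μ ν z ∧ v = objP a b L z}

/-- The transport polytope `Π(μ,ν)`. -/
def transportPolytope (a b : ℕ) (μ : Fin a → ℝ) (ν : Fin b → ℝ) : Set (Fin a → Fin b → ℝ) :=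
  {π | (∀ i j, 0 ≤ π i j) ∧ (∀ i, ∑ j, π i j = μ i) ∧ (∀ j, ∑ i, π i j = ν j)}

/-- The quadratic Gromov-Wasserstein objective `L(π)`. -/
noncomputable def Lquad (a b : ℕ) (L : Fin a → Fin b → Fin a → Fin b → ℝ)
    (π : Fin a → Fin b → ℝ) : ℝ :=
  ∑ i, ∑ j, ∑ k, ∑ l, L i j k l * π i j * π k l

/-- The optimal value of the discrete Gromov-Wasserstein problem (DGW). -/
noncomputable def DGW (a b : ℕ) (μ : Fin a → ℝ) (ν : Fin b → ℝ)
    (L : Fin a → Fin b → Fin a → Fin b → ℝ) : ℝ :=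
  sInf {v : ℝ | ∃ π ∈ transportPolytope a b μ ν, v = Lquad a b L π}

/-!
Substituting `π = x²` entrywise, a moment sequence `w` of `x` gives the moment sequence
`α ↦ w (2α)` of `π`; conversely a moment sequence `z` of `π` extends to one of `x` by
`w (2β) = z β`, all moments with an odd exponent being zero. Since
`expand 2 r_i = -(μ_i - ∑_j x_ij²)`, the Putinar equalities at level `2r - 1` correspond to the
Schmüdgen equalities for `r_i` and `r_i π_q` at level `r - 1`. Positivity of `M_{2r}(w)` reduces
to the Schmüdgen conditions by writing `p = ∑_ε x^ε p_ε(x²)` over the parity patterns `ε` of the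
exponents. So both relaxations have the same feasible values. Finally the moments of a point of
the transport polytope are Schmüdgen-feasible, and the Schmüdgen objective is bounded below
since `0 ≤ z_{δ_a + δ_b} ≤ 1`.
-/

section MultiIndex

variable {σ : Type*}

lemma mdeg_eq_degree (α : σ →₀ ℕ) : mdeg α = α.degree := rfl

lemma exists_add_eq_of_degree_le_two_mul {τ : σ →₀ ℕ} {t : ℕ} (h : τ.degree ≤ 2 * t) :
    ∃ α β : σ →₀ ℕ, α + β = τ ∧ α.degree ≤ t ∧ β.degree ≤ t := by
  obtain ⟨α, hle, hα⟩ := τ.exists_le_degree_eq (min t τ.degree) (min_le_right _ _)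
  have hsum := congrArg Finsupp.degree (add_tsub_cancel_of_le hle)
  rw [map_add] at hsum
  exact ⟨α, τ - α, add_tsub_cancel_of_le hle, by omega, by omega⟩

lemma exists_single_add_of_ne_zero {τ : σ →₀ ℕ} (h : τ ≠ 0) :
    ∃ q τ', τ = Finsupp.single q 1 + τ' := by
  obtain ⟨q, hq⟩ := Finsupp.support_nonempty_iff.mpr h
  have hle : Finsupp.single q 1 ≤ τ :=
    Finsupp.single_le_iff.mpr (Nat.one_le_iff_ne_zero.mpr (Finsupp.mem_support_iff.mp hq))
  exact ⟨q, τ - Finsupp.single q 1, (add_tsub_cancel_of_le hle).symm⟩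

noncomputable def halfIdx (α : σ →₀ ℕ) : σ →₀ ℕ := α.mapRange (· / 2) (Nat.zero_div 2)

noncomputable def parityIdx (α : σ →₀ ℕ) : σ →₀ ℕ := α.mapRange (· % 2) (Nat.zero_mod 2)

@[simp] lemma halfIdx_apply (α : σ →₀ ℕ) (i : σ) : halfIdx α i = α i / 2 := rfl

@[simp] lemma parityIdx_apply (α : σ →₀ ℕ) (i : σ) : parityIdx α i = α i % 2 := rfl

lemma parityIdx_add_two_nsmul_halfIdx (α : σ →₀ ℕ) : parityIdx α + 2 • halfIdx α = α := by
  ext i; simp; omega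

lemma halfIdx_two_nsmul (β : σ →₀ ℕ) : halfIdx (2 • β) = β := by
  ext i; simp

lemma parityIdx_two_nsmul (β : σ →₀ ℕ) : parityIdx (2 • β) = 0 := by
  ext i; simp

lemma degree_eq_degree_parityIdx_add (α : σ →₀ ℕ) :
    α.degree = (parityIdx α).degree + 2 * (halfIdx α).degree := by
  conv_lhs => rw [← parityIdx_add_two_nsmul_halfIdx α]
  rw [map_add, map_nsmul, smul_eq_mul]

lemma card_support_eq_degree {ε : σ →₀ ℕ} (hε : ∀ i, ε i ≤ 1) : ε.support.card = ε.degree := by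
  rw [Finsupp.degree_apply, Finset.card_eq_sum_ones]
  refine Finset.sum_congr rfl fun i hi => ?_
  have := Finsupp.mem_support_iff.mp hi
  have := hε i
  omega

lemma monomial_eq_prod_X {R : Type*} [CommSemiring R] {ε : σ →₀ ℕ} (hε : ∀ i, ε i ≤ 1) :
    (monomial ε (1 : R)) = ∏ i ∈ ε.support, X i := by
  rw [monomial_eq, C_1, one_mul, Finsupp.prod]
  refine Finset.prod_congr rfl fun i hi => ?_
  have := Finsupp.mem_support_iff.mp hi
  rw [show ε i = 1 by have := hε i; omega, pow_one]

end MultiIndex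

section Riesz

variable {σ : Type*}

lemma riesz_eq_constr (z : (σ →₀ ℕ) → ℝ) : riesz z = (basisMonomials σ ℝ).constr ℝ z := by
  ext p
  rw [Module.Basis.constr_apply]
  rfl

lemma riesz_monomial (z : (σ →₀ ℕ) → ℝ) (α : σ →₀ ℕ) (c : ℝ) :
    riesz z (monomial α c) = c * z α := by
  classical
  by_cases hc : c = 0
  · simp [riesz, hc]
  · simp [riesz, support_monomial, hc]

lemma riesz_add (z : (σ →₀ ℕ) → ℝ) (p q : MvPolynomial σ ℝ) :
    riesz z (p + q) = riesz z p + riesz z q := by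
  rw [riesz_eq_constr, map_add]

lemma riesz_neg (z : (σ →₀ ℕ) → ℝ) (p : MvPolynomial σ ℝ) : riesz z (-p) = -riesz z p := by
  rw [riesz_eq_constr, map_neg]

lemma riesz_sum (z : (σ →₀ ℕ) → ℝ) {ι : Type*} (s : Finset ι) (f : ι → MvPolynomial σ ℝ) :
    riesz z (∑ i ∈ s, f i) = ∑ i ∈ s, riesz z (f i) := by
  rw [riesz_eq_constr, map_sum]

lemma riesz_expand_two (z : (σ →₀ ℕ) → ℝ) (p : MvPolynomial σ ℝ) :
    riesz z (expand 2 p) = riesz (fun α => z (2 • α)) p := by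
  induction p using MvPolynomial.induction_on' with
  | monomial α c => rw [expand_monomial, riesz_monomial, riesz_monomial]
  | add p q hp hq => rw [map_add, riesz_add, riesz_add, hp, hq]

lemma locZero_iff {z : (σ →₀ ℕ) → ℝ} {g : MvPolynomial σ ℝ} {t : ℕ} :
    locZero z g t ↔ ∀ τ : σ →₀ ℕ, τ.degree ≤ 2 * t → riesz z (g * monomial τ 1) = 0 := by
  simp only [locZero, mdeg_eq_degree, mul_assoc, monomial_mul, one_mul]
  constructor
  · intro h τ hτ
    obtain ⟨α, β, rfl, hα, hβ⟩ := exists_add_eq_of_degree_le_two_mul hτ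
    exact h α β hα hβ
  · intro h α β hα hβ
    exact h (α + β) (by rw [map_add]; omega)

lemma locZero.neg {z : (σ →₀ ℕ) → ℝ} {g : MvPolynomial σ ℝ} {t : ℕ} (h : locZero z g t) :
    locZero z (-g) t := by
  intro α β hα hβ
  rw [neg_mul, neg_mul, riesz_neg, h α β hα hβ, neg_zero]

lemma locZero.mono {z : (σ →₀ ℕ) → ℝ} {g : MvPolynomial σ ℝ} {t s : ℕ} (h : locZero z g t)
    (hst : s ≤ t) : locZero z g s :=
  fun α β hα hβ => h α β (hα.trans hst) (hβ.trans hst)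

lemma locZero.mul_monomial {z : (σ →₀ ℕ) → ℝ} {g : MvPolynomial σ ℝ} {t : ℕ}
    (h : locZero z g t) {δ : σ →₀ ℕ} {s : ℕ} (hs : δ.degree + 2 * s ≤ 2 * t) :
    locZero z (g * monomial δ 1) s := by
  rw [locZero_iff] at h ⊢
  intro τ hτ
  rw [mul_assoc, monomial_mul, one_mul]
  exact h _ (by rw [map_add]; omega)

lemma riesz_mul_monomial_eq_zero {z : (σ →₀ ℕ) → ℝ} {g : MvPolynomial σ ℝ} {t : ℕ}
    (h₀ : locZero z g t) (hX : ∀ q, locZero z (g * X q) t) {τ : σ →₀ ℕ}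
    (hτ : τ.degree ≤ 2 * t + 1) : riesz z (g * monomial τ 1) = 0 := by
  rcases eq_or_ne τ 0 with rfl | hne
  · exact locZero_iff.mp h₀ 0 (by simp)
  · obtain ⟨q, τ', rfl⟩ := exists_single_add_of_ne_zero hne
    rw [map_add, Finsupp.degree_single] at hτ
    rw [← one_mul (1 : ℝ), ← monomial_mul, ← mul_assoc, ← X]
    exact locZero_iff.mp (hX q) τ' (by omega)

end Riesz

section Moments

variable {σ : Type*}

/-- The moments of the squares `π = x²`, read off from moments `w` of `x`. -/
noncomputable def momentsOfSquares (w : (σ →₀ ℕ) → ℝ) : (σ →₀ ℕ) → ℝ := fun α => w (2 • α)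

/-- Moments of `x` with `x² = π` built from moments `z` of `π`; those with an odd exponent
vanish. -/
noncomputable def momentsOfRoots (z : (σ →₀ ℕ) → ℝ) : (σ →₀ ℕ) → ℝ := fun α =>
  open Classical in if parityIdx α = 0 then z (halfIdx α) else 0

lemma momentsOfRoots_two_nsmul (z : (σ →₀ ℕ) → ℝ) (β : σ →₀ ℕ) :
    momentsOfRoots z (2 • β) = z β := by
  rw [momentsOfRoots, if_pos (parityIdx_two_nsmul β), halfIdx_two_nsmul]

lemma momentsOfSquares_momentsOfRoots (z : (σ →₀ ℕ) → ℝ) :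
    momentsOfSquares (momentsOfRoots z) = z :=
  funext (momentsOfRoots_two_nsmul z)

lemma momentsOfRoots_of_odd (z : (σ →₀ ℕ) → ℝ) {α : σ →₀ ℕ} {q : σ} (hq : α q % 2 = 1) :
    momentsOfRoots z α = 0 := by
  refine if_neg fun h => ?_
  have := DFunLike.congr_fun h q
  simp only [parityIdx_apply, Finsupp.coe_zero, Pi.zero_apply] at this
  omega

lemma riesz_momentsOfRoots_expand (z : (σ →₀ ℕ) → ℝ) (p : MvPolynomial σ ℝ) :
    riesz (momentsOfRoots z) (expand 2 p) = riesz z p := by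
  rw [riesz_expand_two]
  exact congrArg (riesz · p) (momentsOfSquares_momentsOfRoots z)

lemma riesz_momentsOfRoots_monomial_mul_expand_of_odd (z : (σ →₀ ℕ) → ℝ) {δ : σ →₀ ℕ} {q : σ}
    (hq : δ q % 2 = 1) (F : MvPolynomial σ ℝ) :
    riesz (momentsOfRoots z) (monomial δ 1 * expand 2 F) = 0 := by
  induction F using MvPolynomial.induction_on' with
  | monomial β c =>
    rw [expand_monomial, monomial_mul, one_mul, riesz_monomial,
      momentsOfRoots_of_odd z (q := q) (by simp; omega), mul_zero]
  | add F G hF hG => rw [map_add, mul_add, riesz_add, hF, hG, add_zero]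

lemma locZero_momentsOfSquares {w : (σ →₀ ℕ) → ℝ} {G : MvPolynomial σ ℝ} {t : ℕ}
    (h : locZero w (expand 2 G) (2 * t)) : locZero (momentsOfSquares w) G t := by
  intro α β hα hβ
  unfold momentsOfSquares
  rw [← riesz_expand_two, map_mul, map_mul, expand_monomial, expand_monomial]
  exact h _ _ (by simp [mdeg_eq_degree] at hα ⊢; omega) (by simp [mdeg_eq_degree] at hβ ⊢; omega)

lemma locPSD_momentsOfSquares_prod_X {w : (σ →₀ ℕ) → ℝ} {s : ℕ} (h : locPSD w 1 s)
    {I : Finset σ} {t : ℕ} (ht : I.card + 2 * t ≤ s) :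
    locPSD (momentsOfSquares w) (∏ i ∈ I, X i) t := by
  intro p hp
  have hexp : expand 2 ((∏ i ∈ I, X i) * p ^ 2) = 1 * ((∏ i ∈ I, X i) * expand 2 p) ^ 2 := by
    simp only [map_mul, map_pow, map_prod, expand_X, Finset.prod_pow]
    ring
  have hdeg : ((∏ i ∈ I, X i : MvPolynomial σ ℝ) * expand 2 p).totalDegree ≤ s := by
    refine (totalDegree_mul _ _).trans ?_
    have hI : (∏ i ∈ I, X i : MvPolynomial σ ℝ).totalDegree ≤ I.card :=
      (totalDegree_finsetProd _ _).trans (by simp [totalDegree_X])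
    rw [totalDegree_expand]
    omega
  unfold momentsOfSquares
  rw [← riesz_expand_two, hexp]
  exact h _ hdeg

lemma locZero_momentsOfRoots_expand {z : (σ →₀ ℕ) → ℝ} {G : MvPolynomial σ ℝ} {t : ℕ}
    (h : ∀ τ : σ →₀ ℕ, τ.degree ≤ t → riesz z (G * monomial τ 1) = 0) :
    locZero (momentsOfRoots z) (expand 2 G) t := by
  rw [locZero_iff]
  intro γ hγ
  by_cases hpar : parityIdx γ = 0
  · have hγ' := degree_eq_degree_parityIdx_add γ
    rw [← parityIdx_add_two_nsmul_halfIdx γ, hpar, zero_add, ← expand_monomial, ← map_mul,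
      riesz_momentsOfRoots_expand]
    rw [hpar, map_zero] at hγ'
    exact h _ (by omega)
  · obtain ⟨q, hq⟩ := Finsupp.ne_iff.mp hpar
    rw [mul_comm]
    exact riesz_momentsOfRoots_monomial_mul_expand_of_odd z (by simp at hq; omega) G

lemma locZero_momentsOfSquares_of_expand_eq_neg {w : (σ →₀ ℕ) → ℝ} {G g : MvPolynomial σ ℝ}
    {t : ℕ} (hG : expand 2 G = -g) (h : locZero w g (2 * t + 1)) :
    locZero (momentsOfSquares w) G t ∧ ∀ q, locZero (momentsOfSquares w) (G * X q) t :=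
  ⟨locZero_momentsOfSquares (by rw [hG]; exact h.neg.mono (by omega)),
    fun q => locZero_momentsOfSquares (by
      rw [map_mul, hG, expand_X, X_pow_eq_monomial]
      exact h.neg.mul_monomial (by rw [Finsupp.degree_single]; omega))⟩

lemma locZero_momentsOfRoots_of_expand_eq_neg {z : (σ →₀ ℕ) → ℝ} {G g : MvPolynomial σ ℝ}
    {t : ℕ} (hG : expand 2 G = -g) (h₀ : locZero z G t) (hX : ∀ q, locZero z (G * X q) t) :
    locZero (momentsOfRoots z) g (2 * t + 1) := by
  have h := locZero_momentsOfRoots_expand fun τ hτ => riesz_mul_monomial_eq_zero h₀ hX hτ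
  rw [hG] at h
  simpa using h.neg

lemma monomial_mul_expand_mul_monomial_mul_expand (δ δ' : σ →₀ ℕ) (f g : MvPolynomial σ ℝ) :
    monomial δ 1 * expand 2 f * (monomial δ' 1 * expand 2 g)
      = monomial (δ + δ') 1 * expand 2 (f * g) := by
  calc _ = monomial δ 1 * monomial δ' 1 * (expand 2 f * expand 2 g) := by ring
    _ = _ := by rw [monomial_mul, one_mul, map_mul]

variable [DecidableEq σ]

/-- The polynomial `p_ε` in the decomposition `p = ∑_ε x^ε p_ε(x²)`, where `ε` runs over the
parity patterns of the exponents of `p`. -/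
noncomputable def halfComponent (p : MvPolynomial σ ℝ) (ε : σ →₀ ℕ) : MvPolynomial σ ℝ :=
  ∑ α ∈ p.support with parityIdx α = ε, monomial (halfIdx α) (coeff α p)

lemma sum_monomial_mul_expand_halfComponent (p : MvPolynomial σ ℝ) :
    ∑ ε ∈ p.support.image parityIdx, monomial ε 1 * expand 2 (halfComponent p ε) = p := by
  conv_rhs => rw [← support_sum_monomial_coeff p,
    ← Finset.sum_fiberwise_of_maps_to (fun α hα => Finset.mem_image_of_mem parityIdx hα)]
  refine Finset.sum_congr rfl fun ε _ => ?_
  rw [halfComponent, map_sum, Finset.mul_sum]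
  refine Finset.sum_congr (by congr) fun α hα => ?_
  rw [expand_monomial, monomial_mul, one_mul, ← (Finset.mem_filter.mp hα).2,
    parityIdx_add_two_nsmul_halfIdx]

lemma totalDegree_halfComponent_le (p : MvPolynomial σ ℝ) (ε : σ →₀ ℕ) :
    (halfComponent p ε).totalDegree ≤ (p.totalDegree - ε.degree) / 2 := by
  refine totalDegree_finsetSum_le fun α hα => (totalDegree_monomial_le _ _).trans ?_
  obtain ⟨hαp, rfl⟩ := Finset.mem_filter.mp hα
  have := degree_eq_degree_parityIdx_add α
  have : α.degree ≤ p.totalDegree := le_totalDegree hαp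
  change (halfIdx α).degree ≤ _
  omega

/-- In `p² = ∑_{ε,ε'} x^ε p_ε(x²) x^ε' p_ε'(x²)` the cross terms only carry moments with an odd
exponent, and the diagonal terms `x^{2ε} p_ε(x²)²` are the Schmüdgen terms `e_I p_ε(π)²` with
`I = supp ε`. -/
theorem locPSD_momentsOfRoots {z : (σ →₀ ℕ) → ℝ} {t : ℕ}
    (hz : ∀ I : Finset σ, I.card ≤ 2 * t → locPSD z (∏ i ∈ I, X i) (t - (I.card + 1) / 2)) :
    locPSD (momentsOfRoots z) 1 (2 * t) := by
  intro p hp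
  rw [one_mul, ← sum_monomial_mul_expand_halfComponent p, sq, Finset.sum_mul_sum, riesz_sum]
  refine Finset.sum_nonneg fun ε hε => ?_
  rw [riesz_sum]
  refine Finset.sum_nonneg fun ε' hε' => ?_
  obtain ⟨α, hα, rfl⟩ := Finset.mem_image.mp hε
  obtain ⟨α', -, rfl⟩ := Finset.mem_image.mp hε'
  rw [monomial_mul_expand_mul_monomial_mul_expand]
  by_cases hpar : parityIdx α = parityIdx α'
  · rw [← hpar, ← two_nsmul, ← expand_monomial, ← map_mul, riesz_momentsOfRoots_expand, ← sq]
    have hε : ∀ i, parityIdx α i ≤ 1 := fun i => by simp; omega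
    have hdeg := degree_eq_degree_parityIdx_add α
    have hαp : α.degree ≤ p.totalDegree := le_totalDegree hα
    have hcard := card_support_eq_degree hε
    rw [monomial_eq_prod_X hε]
    refine hz _ (by omega) _ ((totalDegree_halfComponent_le p _).trans ?_)
    omega
  · obtain ⟨q, hq⟩ := Finsupp.ne_iff.mp hpar
    refine (riesz_momentsOfRoots_monomial_mul_expand_of_odd z (q := q) ?_ _).ge
    simp only [parityIdx_apply, Finsupp.add_apply] at hq ⊢
    omega

end Moments

section PointMoments

variable {σ : Type*}

noncomputable def pointMoments (x : σ → ℝ) : (σ →₀ ℕ) → ℝ := fun α => eval x (monomial α 1)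

lemma riesz_pointMoments (x : σ → ℝ) (p : MvPolynomial σ ℝ) :
    riesz (pointMoments x) p = eval x p := by
  induction p using MvPolynomial.induction_on' with
  | monomial α c => simp [riesz_monomial, pointMoments, eval_monomial]
  | add p q hp hq => rw [riesz_add, hp, hq, map_add]

lemma locPSD_pointMoments {x : σ → ℝ} {g : MvPolynomial σ ℝ} (hg : 0 ≤ eval x g) (t : ℕ) :
    locPSD (pointMoments x) g t := fun p _ => by
  rw [riesz_pointMoments, map_mul, map_pow]
  exact mul_nonneg hg (sq_nonneg _)

lemma locZero_pointMoments {x : σ → ℝ} {g : MvPolynomial σ ℝ} (hg : eval x g = 0) (t : ℕ) :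
    locZero (pointMoments x) g t := fun α β _ _ => by
  rw [riesz_pointMoments, map_mul, map_mul, hg, zero_mul, zero_mul]

lemma pointMoments_single_add_single (x : σ → ℝ) (a b : σ) :
    pointMoments x (Finsupp.single a 1 + Finsupp.single b 1) = x a * x b := by
  rw [pointMoments, ← mul_one (1 : ℝ), ← monomial_mul, ← X, ← X, map_mul, eval_X, eval_X]

end PointMoments

section GromovWasserstein

variable {m n r : ℕ} {μ : Fin m → ℝ} {ν : Fin n → ℝ}

lemma expand_rowPoly (i : Fin m) :
    expand 2 (rowPoly m n μ i) = -(C (μ i) - ∑ j, X (i, j) ^ 2) := by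
  simp [rowPoly]

lemma expand_colPoly (j : Fin n) :
    expand 2 (colPoly m n ν j) = -(C (ν j) - ∑ i, X (i, j) ^ 2) := by
  simp [colPoly]

lemma sFeas_momentsOfSquares (hr : 0 < r) {w : ((Fin m × Fin n) →₀ ℕ) → ℝ}
    (h : PFeas m n (2 * r) μ ν w) : SFeas m n r μ ν (momentsOfSquares w) := by
  obtain ⟨h0, hpsd, hrow, hcol⟩ := h
  have ht : 2 * r - 1 = 2 * (r - 1) + 1 := by omega
  have hrow' i := locZero_momentsOfSquares_of_expand_eq_neg (expand_rowPoly i) (ht ▸ hrow i)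
  have hcol' j := locZero_momentsOfSquares_of_expand_eq_neg (expand_colPoly j) (ht ▸ hcol j)
  exact ⟨by simpa [momentsOfSquares] using h0,
    fun I _ => locPSD_momentsOfSquares_prod_X hpsd (by omega),
    fun i => (hrow' i).1, fun j => (hcol' j).1,
    fun i₁ i₂ j => (hrow' i₁).2 (i₂, j), fun j₁ j₂ i => (hcol' j₁).2 (i, j₂)⟩

lemma pFeas_momentsOfRoots (hr : 0 < r) {z : ((Fin m × Fin n) →₀ ℕ) → ℝ}
    (h : SFeas m n r μ ν z) : PFeas m n (2 * r) μ ν (momentsOfRoots z) := by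
  obtain ⟨h0, hpsd, hrow, hcol, hrowX, hcolX⟩ := h
  have ht : 2 * r - 1 = 2 * (r - 1) + 1 := by omega
  refine ⟨by simpa [h0] using momentsOfRoots_two_nsmul z 0, locPSD_momentsOfRoots hpsd,
    fun i => ?_, fun j => ?_⟩
  · exact ht ▸ locZero_momentsOfRoots_of_expand_eq_neg (expand_rowPoly i) (hrow i)
      fun q => hrowX i q.1 q.2
  · exact ht ▸ locZero_momentsOfRoots_of_expand_eq_neg (expand_colPoly j) (hcol j)
      fun q => hcolX j q.2 q.1

lemma objP_eq_objS_momentsOfSquares (L : Fin m → Fin n → Fin m → Fin n → ℝ)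
    (w : ((Fin m × Fin n) →₀ ℕ) → ℝ) : objP m n L w = objS m n L (momentsOfSquares w) := by
  simp only [objP, objS, momentsOfSquares, smul_add, Finsupp.smul_single, smul_eq_mul, mul_one]

lemma objP_momentsOfRoots (L : Fin m → Fin n → Fin m → Fin n → ℝ)
    (z : ((Fin m × Fin n) →₀ ℕ) → ℝ) : objP m n L (momentsOfRoots z) = objS m n L z := by
  rw [objP_eq_objS_momentsOfSquares, momentsOfSquares_momentsOfRoots]

lemma valP_two_mul_eq_valS (hr : 0 < r) (L : Fin m → Fin n → Fin m → Fin n → ℝ) :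
    valP m n (2 * r) μ ν L = valS m n r μ ν L := by
  unfold valP valS
  congr 1
  ext v
  constructor
  · rintro ⟨w, hw, rfl⟩
    exact ⟨_, sFeas_momentsOfSquares hr hw, objP_eq_objS_momentsOfSquares L w⟩
  · rintro ⟨z, hz, rfl⟩
    exact ⟨_, pFeas_momentsOfRoots hr hz, (objP_momentsOfRoots L z).symm⟩

lemma IsProbVec.le_one {a : ℕ} {μ : Fin a → ℝ} (hμ : IsProbVec μ) (i : Fin a) : μ i ≤ 1 :=
  hμ.2 ▸ Finset.single_le_sum (fun k _ => hμ.1 k) (Finset.mem_univ i)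

lemma riesz_rowPoly_mul_monomial (z : ((Fin m × Fin n) →₀ ℕ) → ℝ) (i : Fin m)
    (τ : (Fin m × Fin n) →₀ ℕ) :
    riesz z (rowPoly m n μ i * monomial τ 1)
      = ∑ j, z (Finsupp.single (i, j) 1 + τ) - μ i * z τ := by
  have hX q : X q * monomial τ 1 = monomial (Finsupp.single q 1 + τ) (1 : ℝ) := by
    rw [X, monomial_mul, one_mul]
  rw [rowPoly, sub_mul, Finset.sum_mul, sub_eq_add_neg, riesz_add, riesz_neg, riesz_sum,
    C_mul_monomial, mul_one, riesz_monomial, sub_eq_add_neg]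
  simp only [hX, riesz_monomial, one_mul]

namespace SFeas

variable {z : ((Fin m × Fin n) →₀ ℕ) → ℝ}

lemma sum_row_moment (hr : 0 < r) (hz : SFeas m n r μ ν z) (i : Fin m)
    {τ : (Fin m × Fin n) →₀ ℕ} (hτ : τ.degree ≤ 2 * r - 1) :
    ∑ j, z (Finsupp.single (i, j) 1 + τ) = μ i * z τ := by
  have h := riesz_mul_monomial_eq_zero (hz.2.2.1 i) (fun q => hz.2.2.2.2.1 i q.1 q.2)
    (τ := τ) (by omega)
  rw [riesz_rowPoly_mul_monomial] at h
  linarith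

lemma moment_single_nonneg (hr : 0 < r) (hz : SFeas m n r μ ν z) (a : Fin m × Fin n) :
    0 ≤ z (Finsupp.single a 1) := by
  have h := hz.2.1 {a} (by simp; omega) 1 (by simp)
  rwa [eI, Finset.prod_singleton, one_pow, mul_one, X, riesz_monomial, one_mul] at h

lemma moment_pair_nonneg (hr : 0 < r) (hz : SFeas m n r μ ν z) (a b : Fin m × Fin n) :
    0 ≤ z (Finsupp.single a 1 + Finsupp.single b 1) := by
  rcases eq_or_ne a b with rfl | hab
  · have h := hz.2.1 ∅ (by simp) (X a) (by rw [totalDegree_X]; simp; omega)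
    rwa [eI, Finset.prod_empty, one_mul, sq, X, monomial_mul, one_mul, riesz_monomial,
      one_mul] at h
  · have h := hz.2.1 {a, b} (by rw [Finset.card_pair hab]; omega) 1 (by simp)
    rwa [eI, Finset.prod_pair hab, one_pow, mul_one, X, X, monomial_mul, one_mul,
      riesz_monomial, one_mul] at h

lemma moment_single_add_le (hr : 0 < r) (hz : SFeas m n r μ ν z) {a : Fin m × Fin n}
    {τ : (Fin m × Fin n) →₀ ℕ} (hτ : τ.degree ≤ 2 * r - 1)
    (hnonneg : ∀ j, 0 ≤ z (Finsupp.single (a.1, j) 1 + τ)) :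
    z (Finsupp.single a 1 + τ) ≤ μ a.1 * z τ :=
  hz.sum_row_moment hr a.1 hτ ▸ Finset.single_le_sum (fun j _ => hnonneg j) (Finset.mem_univ a.2)

lemma moment_pair_le_one (hr : 0 < r) (hμ : IsProbVec μ) (hz : SFeas m n r μ ν z)
    (a b : Fin m × Fin n) : z (Finsupp.single a 1 + Finsupp.single b 1) ≤ 1 := by
  have hb : z (Finsupp.single b 1) ≤ 1 := by
    have h := hz.moment_single_add_le hr (a := b) (τ := 0) (by simp)
      (fun j => by simpa using hz.moment_single_nonneg hr _)
    rw [add_zero, hz.1, mul_one] at h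
    exact h.trans (hμ.le_one _)
  calc z (Finsupp.single a 1 + Finsupp.single b 1) ≤ μ a.1 * z (Finsupp.single b 1) :=
        hz.moment_single_add_le hr (by simp; omega) fun j => hz.moment_pair_nonneg hr _ _
    _ ≤ 1 := mul_le_one₀ (hμ.le_one _) (hz.moment_single_nonneg hr b) hb

lemma neg_sum_abs_le_objS (hr : 0 < r) (hμ : IsProbVec μ) (hz : SFeas m n r μ ν z)
    (L : Fin m → Fin n → Fin m → Fin n → ℝ) :
    -∑ i, ∑ j, ∑ k, ∑ l, |L i j k l| ≤ objS m n L z := by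
  simp only [objS, ← Finset.sum_neg_distrib]
  gcongr with i _ j _ k _ l _
  have h₀ := hz.moment_pair_nonneg hr (i, j) (k, l)
  have h₁ := hz.moment_pair_le_one hr hμ (i, j) (k, l)
  calc -|L i j k l| ≤ -|L i j k l * z (Finsupp.single (i, j) 1 + Finsupp.single (k, l) 1)| := by
        rw [abs_mul, abs_of_nonneg h₀, neg_le_neg_iff]
        exact mul_le_of_le_one_right (abs_nonneg _) h₁
    _ ≤ _ := neg_abs_le _

end SFeas

lemma sFeas_pointMoments {π : Fin m → Fin n → ℝ} (hπ : π ∈ transportPolytope m n μ ν) :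
    SFeas m n r μ ν (pointMoments fun q => π q.1 q.2) := by
  obtain ⟨hpos, hrow, hcol⟩ := hπ
  refine ⟨by simp [pointMoments], fun I _ => locPSD_pointMoments ?_ _,
    fun i => locZero_pointMoments ?_ _, fun j => locZero_pointMoments ?_ _,
    fun i _ _ => locZero_pointMoments ?_ _, fun j _ _ => locZero_pointMoments ?_ _⟩
  · simpa [eI] using Finset.prod_nonneg fun q _ => hpos q.1 q.2
  all_goals simp [rowPoly, colPoly, hrow, hcol]

lemma objS_pointMoments (L : Fin m → Fin n → Fin m → Fin n → ℝ) (π : Fin m → Fin n → ℝ) :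
    objS m n L (pointMoments fun q => π q.1 q.2) = Lquad m n L π := by
  simp only [objS, Lquad, pointMoments_single_add_single, mul_assoc]

lemma outerProduct_mem_transportPolytope (hμ : IsProbVec μ) (hν : IsProbVec ν) :
    (fun i j => μ i * ν j) ∈ transportPolytope m n μ ν :=
  ⟨fun i j => mul_nonneg (hμ.1 i) (hν.1 j), fun i => by rw [← Finset.mul_sum, hν.2, mul_one],
    fun j => by rw [← Finset.sum_mul, hμ.2, one_mul]⟩

lemma valS_le_DGW (hr : 0 < r) (hμ : IsProbVec μ) (hν : IsProbVec ν)
    (L : Fin m → Fin n → Fin m → Fin n → ℝ) : valS m n r μ ν L ≤ DGW m n μ ν L := by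
  refine csInf_le_csInf ⟨-∑ i, ∑ j, ∑ k, ∑ l, |L i j k l|, ?_⟩
    ⟨_, _, outerProduct_mem_transportPolytope hμ hν, rfl⟩ ?_
  · rintro v ⟨z, hz, rfl⟩
    exact hz.neg_sum_abs_le_objS hr hμ L
  · rintro v ⟨π, hπ, rfl⟩
    exact ⟨_, sFeas_pointMoments hπ, (objS_pointMoments L π).symm⟩

end GromovWasserstein

theorem stmt0_general (m n r : ℕ) (hr : 0 < r)
    (μ : Fin m → ℝ) (ν : Fin n → ℝ) (hμ : IsProbVec μ) (hν : IsProbVec ν)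
    (L : Fin m → Fin n → Fin m → Fin n → ℝ) :
    valP m n (2 * r) μ ν L = valS m n r μ ν L ∧
    valP m n (2 * r) μ ν L ≤ DGW m n μ ν L ∧
    valS m n r μ ν L ≤ DGW m n μ ν L := by
  have hval := valP_two_mul_eq_valS (μ := μ) (ν := ν) hr L
  have hle := valS_le_DGW hr hμ hν L
  exact ⟨hval, hval ▸ hle, hle⟩

/-- For every positive integer r, val(P-DGW-2r) = val(S-DGW-r), and both
values are at most DGW. -/
theorem stmt0 (m n r : ℕ) (hm : 0 < m) (hn : 0 < n) (hr : 0 < r)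
    (μ : Fin m → ℝ) (ν : Fin n → ℝ) (hμ : IsProbVec μ) (hν : IsProbVec ν)
    (L : Fin m → Fin n → Fin m → Fin n → ℝ) :
    valP m n (2 * r) μ ν L = valS m n r μ ν L ∧
    valP m n (2 * r) μ ν L ≤ DGW m n μ ν L ∧
    valS m n r μ ν L ≤ DGW m n μ ν L :=
  stmt0_general m n r hr μ ν hμ hν L
end

section
/- Let r be a positive integer and c ∈ ℝ. Suppose there exist an SOS polynomial σ ∈ ℝ[x_{ij} : i∈[m], j∈[n]] of degree ≤ 4r and polynomials λ_i, θ_j of degree ≤ 4r−2 such that L̃(x) − c = σ(x) + ∑_{i∈[m]} λ_i(x)·(μ_i − ∑_j x_{ij}²) + ∑_{j∈[n]} θ_j(x)·(ν_j − ∑_i x_{ij}²). Then L(π) − c belongs to the truncated preordering T(Π(μ,ν))_{2r}. In particular, every lower bound certified by the level-2r Putinar SOS relaxation of the squared-variable formulation is certified by the level-r Schmüdgen SOS relaxation of the original formulation. -/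
open MvPolynomial

/-- A polynomial is SOS if it is a finite sum of squares of polynomials. -/
def IsSOS {σ : Type*} (p : MvPolynomial σ ℝ) : Prop :=
  ∃ (k : ℕ) (q : Fin k → MvPolynomial σ ℝ), p = ∑ i, q i ^ 2

/-- Membership in the truncated preordering `T(Π(μ,ν))_{2r}`. -/
def InPreT (a b r : ℕ) (μ : Fin a → ℝ) (ν : Fin b → ℝ)
    (f : MvPolynomial (Fin a × Fin b) ℝ) : Prop :=
  ∃ (σ0 : MvPolynomial (Fin a × Fin b) ℝ)
    (σI : Finset (Fin a × Fin b) → MvPolynomial (Fin a × Fin b) ℝ)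
    (lam : Fin a → MvPolynomial (Fin a × Fin b) ℝ)
    (th : Fin b → MvPolynomial (Fin a × Fin b) ℝ),
    IsSOS σ0 ∧ σ0.totalDegree ≤ 2 * r ∧
    (∀ I, IsSOS (σI I) ∧ (eI I * σI I).totalDegree ≤ 2 * r) ∧
    (∀ i, (lam i).totalDegree ≤ 2 * r - 1) ∧
    (∀ j, (th j).totalDegree ≤ 2 * r - 1) ∧
    f = σ0 + ∑ I : Finset (Fin a × Fin b), eI I * σI I
        + ∑ i, lam i * rowPoly a b μ i + ∑ j, th j * colPoly a b ν j

/-- The GW cost as a quadratic polynomial in the variables `π_{ij}`. -/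
noncomputable def Lpoly (a b : ℕ) (L : Fin a → Fin b → Fin a → Fin b → ℝ) :
    MvPolynomial (Fin a × Fin b) ℝ :=
  ∑ i, ∑ j, ∑ k, ∑ l, C (L i j k l) * X (i, j) * X (k, l)

/-- The Schmüdgen SOS lower bound `lb(L, T(Π(μ,ν)))_r`. -/
noncomputable def lbS (a b r : ℕ) (μ : Fin a → ℝ) (ν : Fin b → ℝ)
    (L : Fin a → Fin b → Fin a → Fin b → ℝ) : ℝ :=
  sSup {c : ℝ | InPreT a b r μ ν (Lpoly a b L - C c)}

/-- The squared-variable GW objective `L̃(x) = ∑ L_{ij,kl} x_{ij}² x_{kl}²`. -/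
noncomputable def Ltilde (a b : ℕ) (L : Fin a → Fin b → Fin a → Fin b → ℝ) :
    MvPolynomial (Fin a × Fin b) ℝ :=
  ∑ i, ∑ j, ∑ k, ∑ l, C (L i j k l) * X (i, j) ^ 2 * X (k, l) ^ 2

/-! Every exponent vector is uniquely `2 • δ + oneOn I`, so every polynomial is
`p = ∑ I, x ^ oneOn I * p_I(x²)`. The map `p ↦ p_∅` (keep the monomials with even exponents and
halve them) is linear, satisfies `(p(x²) * q)_∅ = p * q_∅`, and sends a square `s ^ 2` to
`∑ I, x ^ oneOn I * s_I ^ 2`. Applied to the Putinar certificate of `L̃ - c = (L - c)(x²)` it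
turns `λ_i * (μ_i - ∑ j, x_ij²)` into `-(λ_i)_∅ * r_i` and `σ` into `∑ I, e_I * σ_I`, which is a
Schmüdgen certificate of `L - c`; all degrees halve. -/

open Finset

section ExponentParity

variable {σ : Type*}

noncomputable def oneOn (I : Finset σ) : σ →₀ ℕ := ∑ q ∈ I, Finsupp.single q 1

lemma oneOn_apply [DecidableEq σ] (I : Finset σ) (q : σ) :
    oneOn I q = if q ∈ I then 1 else 0 := by
  simp [oneOn, Finsupp.finsetSum_apply, Finsupp.single_apply]

@[simp]
lemma oneOn_empty : oneOn (∅ : Finset σ) = 0 := by simp [oneOn]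

lemma degree_oneOn (I : Finset σ) : (oneOn I).degree = #I := by simp [oneOn]

lemma degree_two_nsmul_add_oneOn (δ : σ →₀ ℕ) (I : Finset σ) :
    (2 • δ + oneOn I).degree = 2 * δ.degree + #I := by
  rw [map_add, map_nsmul, degree_oneOn, smul_eq_mul]

lemma exists_two_nsmul_add_oneOn_eq (α : σ →₀ ℕ) : ∃ δ I, 2 • δ + oneOn I = α := by
  classical
  refine ⟨α.mapRange (· / 2) (Nat.zero_div 2), {q ∈ α.support | Odd (α q)}, Finsupp.ext fun q => ?_⟩
  simp only [Finsupp.add_apply, Finsupp.smul_apply, Finsupp.mapRange_apply, oneOn_apply, mem_filter,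
    Finsupp.mem_support_iff, smul_eq_mul, Nat.odd_iff]
  split_ifs <;> omega

lemma two_nsmul_add_oneOn_inj {δ δ' : σ →₀ ℕ} {I I' : Finset σ} :
    2 • δ + oneOn I = 2 • δ' + oneOn I' ↔ δ = δ' ∧ I = I' := by
  classical
  refine ⟨fun h => ?_, fun ⟨hδ, hI⟩ => hδ ▸ hI ▸ rfl⟩
  have hq (q : σ) : 2 * δ q + (if q ∈ I then 1 else 0) = 2 * δ' q + (if q ∈ I' then 1 else 0) := by
    simpa [oneOn_apply] using DFunLike.congr_fun h q
  refine ⟨Finsupp.ext fun q => ?_, Finset.ext fun q => ?_⟩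
  · have := hq q
    split_ifs at this <;> omega
  · have := hq q
    split_ifs at this <;> simp_all <;> omega

lemma oneOn_add_oneOn [DecidableEq σ] (I J : Finset σ) :
    oneOn I + oneOn J = 2 • oneOn (I ∩ J) + oneOn (symmDiff I J) := by
  ext q
  simp only [Finsupp.add_apply, Finsupp.smul_apply, oneOn_apply, mem_inter, mem_symmDiff,
    smul_eq_mul]
  by_cases hI : q ∈ I <;> by_cases hJ : q ∈ J <;> simp [hI, hJ]

end ExponentParity

namespace MvPolynomial

section ParityPart

variable {σ R : Type*} [CommSemiring R]

noncomputable def parityPart (I : Finset σ) : MvPolynomial σ R →ₗ[R] MvPolynomial σ R :=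
  (AddMonoidAlgebra.coeffLinearEquiv R).symm.toLinearMap ∘ₗ
    Finsupp.lcomapDomain (fun δ => 2 • δ + oneOn I)
      (fun _ _ h => (two_nsmul_add_oneOn_inj.1 h).1) ∘ₗ
    (AddMonoidAlgebra.coeffLinearEquiv R).toLinearMap

lemma coeff_parityPart (I : Finset σ) (p : MvPolynomial σ R) (δ : σ →₀ ℕ) :
    coeff δ (parityPart I p) = coeff (2 • δ + oneOn I) p :=
  rfl

lemma parityPart_monomial [DecidableEq σ] (I J : Finset σ) (δ : σ →₀ ℕ) (c : R) :
    parityPart I (monomial (2 • δ + oneOn J) c) = if J = I then monomial δ c else 0 := by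
  ext δ'
  simp only [coeff_parityPart, coeff_monomial, two_nsmul_add_oneOn_inj]
  split_ifs <;> simp_all [coeff_monomial]

lemma parityPart_expand_two_mul (I : Finset σ) (p q : MvPolynomial σ R) :
    parityPart I (expand 2 p * q) = p * parityPart I q := by
  classical
  induction p using MvPolynomial.induction_on' with
  | add p₁ p₂ h₁ h₂ => rw [map_add, add_mul, map_add, h₁, h₂, add_mul]
  | monomial β b =>
    induction q using MvPolynomial.induction_on' with
    | add q₁ q₂ h₁ h₂ => rw [mul_add, map_add, h₁, h₂, map_add, mul_add]
    | monomial α a =>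
      obtain ⟨δ, J, rfl⟩ := exists_two_nsmul_add_oneOn_eq α
      rw [expand_monomial, monomial_mul,
        ← add_assoc, ← nsmul_add, parityPart_monomial, parityPart_monomial]
      split_ifs <;> simp [monomial_mul]

lemma parityPart_mul_expand_two (I : Finset σ) (p q : MvPolynomial σ R) :
    parityPart I (q * expand 2 p) = parityPart I q * p := by
  rw [mul_comm, parityPart_expand_two_mul, mul_comm]

lemma parityPart_one [DecidableEq σ] (I : Finset σ) :
    parityPart I (1 : MvPolynomial σ R) = if I = ∅ then 1 else 0 := by
  simpa [eq_comm] using parityPart_monomial (R := R) I ∅ 0 1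

lemma parityPart_empty_expand_two (p : MvPolynomial σ R) : parityPart ∅ (expand 2 p) = p := by
  classical
  simpa [parityPart_one] using parityPart_expand_two_mul ∅ p 1

lemma parityPart_empty_monomial_oneOn_mul [DecidableEq σ] (I J : Finset σ) :
    parityPart ∅ (monomial (oneOn I) 1 * monomial (oneOn J) 1 : MvPolynomial σ R) =
      if I = J then monomial (oneOn I) 1 else 0 := by
  simp_rw [monomial_mul, oneOn_add_oneOn, parityPart_monomial, ← Finset.bot_eq_empty,
    symmDiff_eq_bot, mul_one]
  split_ifs with h <;> simp [h]

variable [Fintype σ]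

lemma sum_monomial_oneOn_mul_expand_two_parityPart (p : MvPolynomial σ R) :
    ∑ I, monomial (oneOn I) 1 * expand 2 (parityPart I p) = p := by
  classical
  induction p using MvPolynomial.induction_on' with
  | add p₁ p₂ h₁ h₂ => simp only [map_add, mul_add, sum_add_distrib, h₁, h₂]
  | monomial α a =>
    obtain ⟨δ, J, rfl⟩ := exists_two_nsmul_add_oneOn_eq α
    simp only [parityPart_monomial, apply_ite, map_zero, mul_zero, sum_ite_eq, mem_univ, if_true,
      expand_monomial, monomial_mul, one_mul, add_comm (oneOn J)]

lemma parityPart_empty_sq (p : MvPolynomial σ R) :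
    parityPart ∅ (p ^ 2) = ∑ I, monomial (oneOn I) 1 * parityPart I p ^ 2 := by
  classical
  have hterm (I J : Finset σ) :
      parityPart ∅ (monomial (oneOn I) 1 * expand 2 (parityPart I p) *
        (monomial (oneOn J) 1 * expand 2 (parityPart J p)))
        = if I = J then monomial (oneOn I) 1 * parityPart I p ^ 2 else 0 := by
    rw [mul_mul_mul_comm, mul_comm (expand 2 _), ← map_mul, mul_comm, parityPart_expand_two_mul,
      parityPart_empty_monomial_oneOn_mul]
    split_ifs with h <;> simp [h, sq, mul_comm]
  conv_lhs => rw [← sum_monomial_oneOn_mul_expand_two_parityPart p, sq, sum_mul_sum]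
  simp only [map_sum, hterm, sum_ite_eq, mem_univ, if_true]

end ParityPart

section Degree

variable {σ R : Type*} [CommSemiring R]

lemma exists_mem_support_degree_eq_totalDegree {p : MvPolynomial σ R} (hp : p ≠ 0) :
    ∃ d ∈ p.support, d.degree = p.totalDegree := by
  obtain ⟨d, hd, hdeg⟩ :=
    p.support.exists_mem_eq_sup (support_nonempty.2 hp) fun s => s.sum fun _ e => e
  exact ⟨d, hd, hdeg.symm⟩

lemma two_mul_totalDegree_parityPart_add_card_le {I : Finset σ} {p : MvPolynomial σ R}
    (h : parityPart I p ≠ 0) : 2 * (parityPart I p).totalDegree + #I ≤ p.totalDegree := by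
  obtain ⟨δ, hδ, hdeg⟩ := exists_mem_support_degree_eq_totalDegree h
  have hδp : 2 • δ + oneOn I ∈ p.support := by
    rwa [mem_support_iff, ← coeff_parityPart, ← mem_support_iff]
  calc 2 * (parityPart I p).totalDegree + #I = (2 • δ + oneOn I).degree := by
        rw [degree_two_nsmul_add_oneOn, hdeg]
    _ ≤ p.totalDegree := le_totalDegree hδp

lemma two_mul_totalDegree_parityPart_le (I : Finset σ) (p : MvPolynomial σ R) :
    2 * (parityPart I p).totalDegree ≤ p.totalDegree := by
  by_cases h : parityPart I p = 0
  · simp [h]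
  · have := two_mul_totalDegree_parityPart_add_card_le h
    omega

lemma totalDegree_monomial_oneOn_mul_parityPart_sq_le (I : Finset σ) (p : MvPolynomial σ R) :
    (monomial (oneOn I) (1 : R) * parityPart I p ^ 2).totalDegree ≤ p.totalDegree := by
  by_cases h : parityPart I p = 0
  · simp [h]
  calc (monomial (oneOn I) (1 : R) * parityPart I p ^ 2).totalDegree
      ≤ #I + 2 * (parityPart I p).totalDegree := by
        refine (totalDegree_mul _ _).trans (add_le_add ?_ ?_)
        · exact (totalDegree_monomial_le _ _).trans (degree_oneOn I).le
        · exact totalDegree_pow _ 2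
    _ ≤ p.totalDegree := by
        have := two_mul_totalDegree_parityPart_add_card_le h
        omega

lemma homogeneousComponent_add_mul_of_totalDegree_le {f g : MvPolynomial σ R} {m n : ℕ}
    (hf : f.totalDegree ≤ m) (hg : g.totalDegree ≤ n) :
    homogeneousComponent (m + n) (f * g) =
      homogeneousComponent m f * homogeneousComponent n g := by
  classical
  ext d
  simp only [coeff_homogeneousComponent, coeff_mul]
  split_ifs with hd
  · refine sum_congr rfl fun ⟨a, b⟩ hab => ?_
    dsimp only
    have hdeg : a.degree + b.degree = m + n := by
      rw [← map_add, (mem_antidiagonal.1 hab), hd]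
    by_cases ha : m < a.degree
    · simp [coeff_eq_zero_of_totalDegree_lt (hf.trans_lt ha)]
    by_cases hb : n < b.degree
    · simp [coeff_eq_zero_of_totalDegree_lt (hg.trans_lt hb)]
    rw [if_pos (by omega), if_pos (by omega)]
  · refine (sum_eq_zero fun ⟨a, b⟩ hab => ?_).symm
    dsimp only
    have hdeg : a.degree + b.degree = d.degree := by rw [← map_add, (mem_antidiagonal.1 hab)]
    split_ifs <;> first | omega | simp

lemma homogeneousComponent_totalDegree_ne_zero {p : MvPolynomial σ R} (hp : p ≠ 0) :
    homogeneousComponent p.totalDegree p ≠ 0 := by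
  obtain ⟨d, hd, hdeg⟩ := exists_mem_support_degree_eq_totalDegree hp
  refine ne_zero_iff.2 ⟨d, ?_⟩
  rw [coeff_homogeneousComponent, if_pos hdeg]
  exact mem_support_iff.1 hd

end Degree

section SumOfSquares

variable {σ R ι : Type*} [CommRing R] [LinearOrder R] [IsStrictOrderedRing R] [Fintype ι]

lemma eq_zero_of_sum_sq_eq_zero {f : ι → MvPolynomial σ R} (h : ∑ i, f i ^ 2 = 0) (i : ι) :
    f i = 0 := by
  refine funext fun x => ?_
  have hx : ∑ i, eval x (f i) ^ 2 = 0 := by simpa using congrArg (eval x) h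
  simpa using (sum_eq_zero_iff_of_nonneg fun i _ => sq_nonneg (eval x (f i))).1 hx i (mem_univ i)

/-- The top-degree forms of a real sum of squares cannot cancel. -/
lemma two_mul_totalDegree_le_totalDegree_sum_sq (q : ι → MvPolynomial σ R) (i : ι) :
    2 * (q i).totalDegree ≤ (∑ j, q j ^ 2).totalDegree := by
  by_contra! hlt
  set D := univ.sup fun j => (q j).totalDegree
  have hD (j : ι) : (q j).totalDegree ≤ D := le_sup (f := fun j => (q j).totalDegree) (mem_univ j)
  obtain ⟨j, -, hj⟩ := exists_mem_eq_sup univ ⟨i, mem_univ i⟩ fun j => (q j).totalDegree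
  have htop : ∑ j, homogeneousComponent D (q j) ^ 2 = 0 := by
    calc ∑ j, homogeneousComponent D (q j) ^ 2
        = homogeneousComponent (D + D) (∑ j, q j ^ 2) := by
          simp only [map_sum, sq, homogeneousComponent_add_mul_of_totalDegree_le (hD _) (hD _)]
      _ = 0 := homogeneousComponent_eq_zero _ _ (by have := hD i; omega)
  have hqj : q j ≠ 0 := by
    rintro hzero
    have := hD i
    rw [hzero, totalDegree_zero] at hj
    omega
  exact homogeneousComponent_totalDegree_ne_zero hqj (hj ▸ eq_zero_of_sum_sq_eq_zero htop j)

end SumOfSquares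

end MvPolynomial

section OptimalTransportCertificates

variable {a b : ℕ}

lemma eI_eq_monomial_oneOn (I : Finset (Fin a × Fin b)) : eI I = monomial (oneOn I) 1 := by
  rw [eI, oneOn, monomial_sum_one]
  rfl

lemma expand_two_Lpoly (L : Fin a → Fin b → Fin a → Fin b → ℝ) :
    expand 2 (Lpoly a b L) = Ltilde a b L := by
  simp [Lpoly, Ltilde]

lemma expand_two_neg_rowPoly (μ : Fin a → ℝ) (i : Fin a) :
    expand 2 (-rowPoly a b μ i) = C (μ i) - ∑ j, X (i, j) ^ 2 := by
  simp [rowPoly]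

lemma expand_two_neg_colPoly (ν : Fin b → ℝ) (j : Fin b) :
    expand 2 (-colPoly a b ν j) = C (ν j) - ∑ i, X (i, j) ^ 2 := by
  simp [colPoly]

lemma parityPart_empty_sum_sq {K : ℕ} (q : Fin K → MvPolynomial (Fin a × Fin b) ℝ) :
    parityPart ∅ (∑ k, q k ^ 2) = ∑ I, eI I * ∑ k, parityPart I (q k) ^ 2 := by
  simp only [map_sum, parityPart_empty_sq, eI_eq_monomial_oneOn, mul_sum]
  exact sum_comm

end OptimalTransportCertificates

theorem stmt4_general (m n r : ℕ)
    (μ : Fin m → ℝ) (ν : Fin n → ℝ)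
    (L : Fin m → Fin n → Fin m → Fin n → ℝ) (c : ℝ)
    (σ0 : MvPolynomial (Fin m × Fin n) ℝ)
    (lam : Fin m → MvPolynomial (Fin m × Fin n) ℝ)
    (th : Fin n → MvPolynomial (Fin m × Fin n) ℝ)
    (hσ0 : IsSOS σ0) (hσ0deg : σ0.totalDegree ≤ 4 * r)
    (hlamdeg : ∀ i, (lam i).totalDegree ≤ 4 * r - 2)
    (hthdeg : ∀ j, (th j).totalDegree ≤ 4 * r - 2)
    (hcert : Ltilde m n L - C c =
      σ0 + ∑ i, lam i * (C (μ i) - ∑ j, X (i, j) ^ 2)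
         + ∑ j, th j * (C (ν j) - ∑ i, X (i, j) ^ 2)) :
    InPreT m n r μ ν (Lpoly m n L - C c) := by
  obtain ⟨K, q, rfl⟩ := hσ0
  have hq (k : Fin K) : (q k).totalDegree ≤ 2 * r := by
    have := two_mul_totalDegree_le_totalDegree_sum_sq q k
    omega
  have hLpoly := congrArg (parityPart ∅) hcert
  rw [← expand_two_Lpoly, ← expand_C 2 c, ← map_sub, parityPart_empty_expand_two] at hLpoly
  refine ⟨0, fun I => ∑ k, parityPart I (q k) ^ 2, fun i => -parityPart ∅ (lam i),
    fun j => -parityPart ∅ (th j), ⟨0, Fin.elim0, by simp⟩, by simp,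
    fun I => ⟨⟨K, _, rfl⟩, ?_⟩, fun i => ?_, fun j => ?_, ?_⟩
  · rw [eI_eq_monomial_oneOn, mul_sum]
    exact (totalDegree_finsetSum _ _).trans <| Finset.sup_le fun k _ =>
      (totalDegree_monomial_oneOn_mul_parityPart_sq_le I (q k)).trans (hq k)
  · have := two_mul_totalDegree_parityPart_le ∅ (lam i)
    have := hlamdeg i
    rw [totalDegree_neg]
    omega
  · have := two_mul_totalDegree_parityPart_le ∅ (th j)
    have := hthdeg j
    rw [totalDegree_neg]
    omega
  · rw [hLpoly, map_add, map_add, parityPart_empty_sum_sq, zero_add]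
    simp only [map_sum, ← expand_two_neg_rowPoly, ← expand_two_neg_colPoly,
      parityPart_mul_expand_two, neg_mul_comm]

/-- If `L̃(x) − c` has a Putinar certificate of degree `4r` in the squared
variables, then `L(π) − c` belongs to the truncated preordering `T(Π(μ,ν))_{2r}`. -/
theorem stmt4 (m n r : ℕ) (hm : 0 < m) (hn : 0 < n) (hr : 0 < r)
    (μ : Fin m → ℝ) (ν : Fin n → ℝ) (hμ : IsProbVec μ) (hν : IsProbVec ν)
    (L : Fin m → Fin n → Fin m → Fin n → ℝ) (c : ℝ)
    (σ0 : MvPolynomial (Fin m × Fin n) ℝ)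
    (lam : Fin m → MvPolynomial (Fin m × Fin n) ℝ)
    (th : Fin n → MvPolynomial (Fin m × Fin n) ℝ)
    (hσ0 : IsSOS σ0) (hσ0deg : σ0.totalDegree ≤ 4 * r)
    (hlamdeg : ∀ i, (lam i).totalDegree ≤ 4 * r - 2)
    (hthdeg : ∀ j, (th j).totalDegree ≤ 4 * r - 2)
    (hcert : Ltilde m n L - C c =
      σ0 + ∑ i, lam i * (C (μ i) - ∑ j, X (i, j) ^ 2)
         + ∑ j, th j * (C (ν j) - ∑ i, X (i, j) ^ 2)) :
    InPreT m n r μ ν (Lpoly m n L - C c) :=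
  stmt4_general m n r μ ν L c σ0 lam th hσ0 hσ0deg hlamdeg hthdeg hcert
end

section
/- For every SOS polynomial p ∈ ℝ[x₁,…,x_n] there exist SOS polynomials p_I ∈ ℝ[x₁,…,x_n], indexed by the subsets I ⊆ [n], such that ∑_{ε∈{−1,1}^n} p(ε₁x₁,…,ε_nx_n) = ∑_{I⊆[n]} (∏_{i∈I} x_i²) · p_I(x₁²,…,x_n²), where p_I(x₁²,…,x_n²) denotes the polynomial obtained from p_I by substituting x_i² for x_i. -/
open MvPolynomial Finset
open scoped symmDiff

noncomputable section
variable {n : ℕ}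

def sg (s : Fin n → Bool) (i : Fin n) : ℝ := if s i then 1 else -1

lemma sg_sq (s : Fin n → Bool) (i : Fin n) : sg s i ^ 2 = 1 := by
  unfold sg; split <;> norm_num

lemma char_sum (K : Finset (Fin n)) :
    ∑ s : Fin n → Bool, ∏ i ∈ K, sg s i = if K = ∅ then (2:ℝ)^n else 0 := by
  have h1 : ∀ s : Fin n → Bool, ∏ i ∈ K, sg s i
      = ∏ i : Fin n, (fun i (b : Bool) => if i ∈ K then (if b then (1:ℝ) else -1) else 1) i (s i) := by
    intro s
    rw [show (∏ i : Fin n, (fun i (b : Bool) => if i ∈ K then (if b then (1:ℝ) else -1) else 1) i (s i)) = ∏ i : Fin n, (if i ∈ K then sg s i else 1) from rfl]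
    rw [Finset.prod_ite_mem, Finset.univ_inter]
  simp_rw [h1]
  rw [← Fintype.prod_sum (fun i (b : Bool) => if i ∈ K then (if b then (1:ℝ) else -1) else 1)]
  have h2 : ∀ i : Fin n, (∑ b : Bool, if i ∈ K then (if b then (1:ℝ) else -1) else 1)
      = if i ∈ K then 0 else 2 := by
    intro i; rw [Fintype.sum_bool]; split <;> norm_num
  simp_rw [h2]
  by_cases hK : K = ∅
  · simp [hK]
  · rw [if_neg hK]
    obtain ⟨i, hi⟩ := Finset.nonempty_iff_ne_empty.2 hK
    exact Finset.prod_eq_zero (Finset.mem_univ i) (by simp [hi])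

def sqv (n : ℕ) : MvPolynomial (Fin n) ℝ →ₐ[ℝ] MvPolynomial (Fin n) ℝ :=
  aeval fun i => (X i : MvPolynomial (Fin n) ℝ) ^ 2

def ev (s : Fin n → Bool) : MvPolynomial (Fin n) ℝ →ₐ[ℝ] MvPolynomial (Fin n) ℝ :=
  aeval fun i => C (sg s i) * X i

lemma ev_sqv (s : Fin n → Bool) (h : MvPolynomial (Fin n) ℝ) :
    ev s (sqv n h) = sqv n h := by
  rw [sqv, ev, comp_aeval_apply]
  have h2 : (fun i => (aeval fun j => C (sg s j) * X j) ((X i : MvPolynomial (Fin n) ℝ) ^ 2))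
      = fun i => (X i : MvPolynomial (Fin n) ℝ) ^ 2 := by
    funext i
    rw [map_pow, aeval_X, mul_pow, ← C_pow, sg_sq, C_1, one_mul]
  rw [h2]

lemma ev_prodX (s : Fin n → Bool) (I : Finset (Fin n)) :
    ev s (∏ i ∈ I, X i) = C (∏ i ∈ I, sg s i) * ∏ i ∈ I, X i := by
  rw [map_prod]
  have : ∀ i ∈ I, ev s (X i) = C (sg s i) * X i := fun i _ => aeval_X _ i
  rw [Finset.prod_congr rfl this, Finset.prod_mul_distrib, map_prod]

lemma prod_sg_mul (s : Fin n → Bool) (I J : Finset (Fin n)) :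
    (∏ i ∈ I, sg s i) * ∏ i ∈ J, sg s i = ∏ i ∈ I ∆ J, sg s i := by
  classical
  rw [← Finset.prod_union_inter]
  have hU : I ∪ J = I ∆ J ∪ (I ∩ J) := by
    rw [← Finset.sup_eq_union, ← symmDiff_sup_inf]; rfl
  have hd : Disjoint (I ∆ J) (I ∩ J) := disjoint_symmDiff_inf I J
  rw [hU, Finset.prod_union hd, mul_assoc, ← Finset.prod_mul_distrib]
  simp_rw [← sq, sg_sq, Finset.prod_const_one, mul_one]

lemma decomp (q : MvPolynomial (Fin n) ℝ) :
    ∃ h : Finset (Fin n) → MvPolynomial (Fin n) ℝ,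
      q = ∑ I : Finset (Fin n), (∏ i ∈ I, X i) * sqv n (h I) := by
  induction q using MvPolynomial.induction_on with
  | C a =>
    refine ⟨fun I => if I = ∅ then C a else 0, ?_⟩
    rw [Finset.sum_eq_single ∅]
    · simp [sqv]
    · intro I _ hI; simp [hI]
    · simp
  | add q r hq hr =>
    obtain ⟨h1, e1⟩ := hq; obtain ⟨h2, e2⟩ := hr
    refine ⟨fun I => h1 I + h2 I, ?_⟩
    simp [e1, e2, mul_add, Finset.sum_add_distrib]
  | mul_X q i hq =>
    obtain ⟨h, e⟩ := hq
    classical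
    refine ⟨fun J => if i ∈ J then h (J.erase i) else X i * h (insert i J), ?_⟩
    have finv : Function.Involutive (fun I : Finset (Fin n) =>
        if i ∈ I then I.erase i else insert i I) := by
      intro I
      by_cases hiI : i ∈ I
      · simp [hiI, Finset.insert_erase hiI]
      · simp [hiI, Finset.erase_insert hiI]
    rw [e, Finset.sum_mul]
    rw [← Equiv.sum_comp (Function.Involutive.toPerm _ finv)
      (fun J => (∏ i ∈ J, (X i : MvPolynomial (Fin n) ℝ)) *
        sqv n (if i ∈ J then h (J.erase i) else X i * h (insert i J)))]
    apply Finset.sum_congr rfl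
    intro I _
    by_cases hiI : i ∈ I
    · have h1 : Function.Involutive.toPerm _ finv I = I.erase i := by simp [Function.Involutive.toPerm, hiI]
      rw [h1, if_neg (Finset.notMem_erase i I), Finset.insert_erase hiI]
      rw [map_mul]
      have : sqv n (X i) = X i ^ 2 := aeval_X _ i
      rw [this, ← Finset.mul_prod_erase I _ hiI]
      ring
    · have h1 : Function.Involutive.toPerm _ finv I = insert i I := by simp [Function.Involutive.toPerm, hiI]
      rw [h1, if_pos (Finset.mem_insert_self i I), Finset.erase_insert hiI,
        Finset.prod_insert hiI]
      ring

lemma key (q : MvPolynomial (Fin n) ℝ) :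
    ∃ h : Finset (Fin n) → MvPolynomial (Fin n) ℝ,
      ∑ s : Fin n → Bool, (ev s q) ^ 2
        = ∑ I : Finset (Fin n), (∏ i ∈ I, X i ^ 2) * sqv n (C ((2:ℝ)^n) * (h I)^2) := by
  classical
  obtain ⟨h, e⟩ := decomp q
  refine ⟨h, ?_⟩
  have evq : ∀ s, ev s q = ∑ I : Finset (Fin n),
      C (∏ i ∈ I, sg s i) * ((∏ i ∈ I, X i) * sqv n (h I)) := by
    intro s
    rw [e, map_sum]
    refine Finset.sum_congr rfl fun I _ => ?_
    rw [map_mul, ev_prodX, ev_sqv, mul_assoc]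
  calc ∑ s : Fin n → Bool, (ev s q)^2
      = ∑ s : Fin n → Bool, ∑ I : Finset (Fin n), ∑ J : Finset (Fin n),
          C ((∏ i ∈ I, sg s i) * (∏ i ∈ J, sg s i)) *
            (((∏ i ∈ I, X i) * sqv n (h I)) * ((∏ i ∈ J, X i) * sqv n (h J))) := by
        refine Finset.sum_congr rfl fun s _ => ?_
        rw [evq s, sq, Finset.sum_mul_sum]
        refine Finset.sum_congr rfl fun I _ => Finset.sum_congr rfl fun J _ => ?_
        rw [C_mul]; ring
    _ = ∑ I : Finset (Fin n), ∑ J : Finset (Fin n),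
          C (∑ s : Fin n → Bool, (∏ i ∈ I, sg s i) * (∏ i ∈ J, sg s i)) *
            (((∏ i ∈ I, X i) * sqv n (h I)) * ((∏ i ∈ J, X i) * sqv n (h J))) := by
        rw [Finset.sum_comm]
        refine Finset.sum_congr rfl fun I _ => ?_
        rw [Finset.sum_comm]
        refine Finset.sum_congr rfl fun J _ => ?_
        rw [map_sum, Finset.sum_mul]
    _ = ∑ I : Finset (Fin n), ∑ J : Finset (Fin n),
          (if I = J then C ((2:ℝ)^n) else 0) *
            (((∏ i ∈ I, X i) * sqv n (h I)) * ((∏ i ∈ J, X i) * sqv n (h J))) := by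
        refine Finset.sum_congr rfl fun I _ => Finset.sum_congr rfl fun J _ => ?_
        simp_rw [prod_sg_mul]
        rw [char_sum]
        by_cases hIJ : I = J
        · rw [if_pos hIJ, if_pos (by rw [hIJ]; simp [symmDiff_self])]
        · rw [if_neg hIJ, if_neg (fun hc => hIJ (by
            rwa [← Finset.bot_eq_empty, symmDiff_eq_bot] at hc)), C_0]
    _ = ∑ I : Finset (Fin n),
          C ((2:ℝ)^n) * (((∏ i ∈ I, X i) * sqv n (h I)) * ((∏ i ∈ I, X i) * sqv n (h I))) := by
        refine Finset.sum_congr rfl fun I _ => ?_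
        rw [Finset.sum_eq_single I]
        · rw [if_pos rfl]
        · intro J _ hJ
          rw [if_neg (fun hc => hJ hc.symm), zero_mul]
        · intro hI; exact absurd (Finset.mem_univ I) hI
    _ = ∑ I : Finset (Fin n), (∏ i ∈ I, X i ^ 2) * sqv n (C ((2:ℝ)^n) * (h I)^2) := by
        refine Finset.sum_congr rfl fun I _ => ?_
        have h1 : sqv n (C ((2:ℝ)^n) * (h I)^2) = C ((2:ℝ)^n) * (sqv n (h I))^2 := by
          rw [map_mul, map_pow]
          simp [sqv, algebraMap_eq]
        rw [h1, Finset.prod_pow]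
        ring

lemma isSOS_zero {σ : Type*} : IsSOS (0 : MvPolynomial σ ℝ) :=
  ⟨0, fun i => 0, by simp⟩

lemma isSOS_add {σ : Type*} {p q : MvPolynomial σ ℝ} (hp : IsSOS p) (hq : IsSOS q) :
    IsSOS (p + q) := by
  obtain ⟨k1, f1, h1⟩ := hp
  obtain ⟨k2, f2, h2⟩ := hq
  refine ⟨k1 + k2, Fin.append f1 f2, ?_⟩
  rw [Fin.sum_univ_add, h1, h2]
  simp [Fin.append_left, Fin.append_right]

lemma isSOS_sum {σ α : Type*} (s : Finset α) (f : α → MvPolynomial σ ℝ)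
    (hf : ∀ a ∈ s, IsSOS (f a)) : IsSOS (∑ a ∈ s, f a) :=
  Finset.sum_induction f IsSOS (fun _ _ => isSOS_add) isSOS_zero hf

lemma isSOS_two_pow_mul_sq (m : ℕ) {σ : Type*} (h : MvPolynomial σ ℝ) :
    IsSOS (C ((2:ℝ)^m) * h^2) := by
  refine ⟨2^m, fun _ => h, ?_⟩
  rw [Finset.sum_const, Finset.card_univ, Fintype.card_fin, nsmul_eq_mul]
  congr 1
  push_cast
  rw [map_pow, map_ofNat]

/-- For every SOS polynomial `p` in `n` variables there are SOS
polynomials `p_I`, indexed by subsets `I ⊆ [n]`, with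
`∑_{ε ∈ {−1,1}^n} p(ε·x) = ∑_I (∏_{i∈I} x_i²) · p_I(x₁²,…,x_n²)`. -/
theorem stmt5 (n : ℕ) (p : MvPolynomial (Fin n) ℝ) (hp : IsSOS p) :
    ∃ pI : Finset (Fin n) → MvPolynomial (Fin n) ℝ,
      (∀ I, IsSOS (pI I)) ∧
      (∑ s : Fin n → Bool,
          (aeval fun i => C (if s i then (1 : ℝ) else -1) * X i) p)
        = ∑ I : Finset (Fin n),
            (∏ i ∈ I, X i ^ 2) * (aeval fun i => (X i : MvPolynomial (Fin n) ℝ) ^ 2) (pI I) := by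
  classical
  obtain ⟨k, q, hq⟩ := hp
  choose h hh using fun j : Fin k => key (q j)
  refine ⟨fun I => ∑ j : Fin k, C ((2:ℝ)^n) * (h j I)^2, ?_, ?_⟩
  · intro I
    exact isSOS_sum _ _ fun j _ => isSOS_two_pow_mul_sq n (h j I)
  · show ∑ s : Fin n → Bool, ev s p
        = ∑ I : Finset (Fin n), (∏ i ∈ I, X i ^ 2) *
            sqv n (∑ j : Fin k, C ((2:ℝ)^n) * (h j I)^2)
    have h1 : ∀ s : Fin n → Bool, ev s p = ∑ j : Fin k, (ev s (q j))^2 := by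
      intro s; rw [hq, map_sum]; simp_rw [map_pow]
    simp_rw [h1]
    rw [Finset.sum_comm]
    calc ∑ j : Fin k, ∑ s : Fin n → Bool, (ev s (q j))^2
        = ∑ j : Fin k, ∑ I : Finset (Fin n),
            (∏ i ∈ I, X i ^ 2) * sqv n (C ((2:ℝ)^n) * (h j I)^2) :=
          Finset.sum_congr rfl fun j _ => hh j
      _ = ∑ I : Finset (Fin n), ∑ j : Fin k,
            (∏ i ∈ I, X i ^ 2) * sqv n (C ((2:ℝ)^n) * (h j I)^2) := Finset.sum_comm
      _ = ∑ I : Finset (Fin n), (∏ i ∈ I, X i ^ 2) *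
            sqv n (∑ j : Fin k, C ((2:ℝ)^n) * (h j I)^2) := by
          refine Finset.sum_congr rfl fun I _ => ?_
          rw [map_sum, Finset.mul_sum]

end
end

section
/- There exists a constant B > 0 (depending only on m, n, μ, ν) such that for every π₀ ∈ Δ_{mn}, the Euclidean distance from π₀ to the transport polytope satisfies dist(π₀, Π(μ,ν)) ≤ B·h(π₀). -/
/-- The transport polytope `Π(μ,ν)` inside Euclidean space `ℝ^{m×n}`. -/
def transportSet (m n : ℕ) (μ : Fin m → ℝ) (ν : Fin n → ℝ) :
    Set (EuclideanSpace ℝ (Fin m × Fin n)) :=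
  {π | (∀ i j, 0 ≤ π (i, j)) ∧ (∀ i, ∑ j, π (i, j) = μ i) ∧ (∀ j, ∑ i, π (i, j) = ν j)}

/-- The simplex `Δ_{mn}` inside Euclidean space `ℝ^{m×n}`. -/
def deltaSet (m n : ℕ) : Set (EuclideanSpace ℝ (Fin m × Fin n)) :=
  {π | (∀ i j, 0 ≤ π (i, j)) ∧ ∑ i, ∑ j, π (i, j) ≤ 1}

/-- The residual function `h(π) = max{|g(π)|, max_i |r_i(π)|, max_j |c_j(π)|}`. -/
noncomputable def hFun (m n : ℕ) (μ : Fin m → ℝ) (ν : Fin n → ℝ)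
    (π : EuclideanSpace ℝ (Fin m × Fin n)) : ℝ :=
  max |1 - ∑ i, ∑ j, π (i, j)|
    (max (⨆ i, |(∑ j, π (i, j)) - μ i|) (⨆ j, |(∑ i, π (i, j)) - ν j|))

/-- The quadratic GW objective `L(π)` on Euclidean space. -/
noncomputable def LobjE (m n : ℕ) (L : Fin m → Fin n → Fin m → Fin n → ℝ)
    (π : EuclideanSpace ℝ (Fin m × Fin n)) : ℝ :=
  ∑ i, ∑ j, ∑ k, ∑ l, L i j k l * π (i, j) * π (k, l)

/-- The maximal absolute value `K = max |L_{ij,kl}|` of the cost tensor. -/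
noncomputable def Kmax (m n : ℕ) (L : Fin m → Fin n → Fin m → Fin n → ℝ) : ℝ :=
  sSup {v : ℝ | ∃ i j k l, v = |L i j k l|}

/-! Round `π₀` to a coupling in two steps. Scaling each row of `π₀` down to mass at most `μ i`,
and then each column down to mass at most `ν j`, removes at most `∑ᵢ (rᵢ)⁺ + ∑ⱼ (cⱼ)⁺ ≤ (m + n) h`
of mass and leaves a matrix `g ≤ π₀` whose row and column deficits are nonnegative with equal
totals. Adding the product of these deficits, divided by their total, gives a coupling `F ≥ g`.
As `π₀` and `F` both lie above `g`,
`‖π₀ - F‖₂ ≤ ‖π₀ - F‖₁ ≤ ∑ (π₀ - g) + ∑ (F - g) = 2 ∑ (π₀ - g) + (1 - ∑ π₀) ≤ (2 (m + n) + 1) h`. -/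

open Finset

theorem EuclideanSpace.norm_le_sum_norm {𝕜 ι : Type*} [RCLike 𝕜] [Fintype ι]
    (x : EuclideanSpace 𝕜 ι) : ‖x‖ ≤ ∑ i, ‖x i‖ :=
  (abs_le_of_sq_le_sq' (by
    rw [EuclideanSpace.norm_sq_eq]
    exact sum_sq_le_sq_sum_of_nonneg fun _ _ => norm_nonneg _) (by positivity)).2

lemma mul_min_one_div_self {a c : ℝ} (ha : 0 ≤ a) (hc : 0 ≤ c) :
    a * min 1 (c / a) = min a c := by
  rcases ha.eq_or_lt with rfl | ha
  · rw [zero_mul, min_eq_left hc]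
  · rw [mul_min_of_nonneg _ _ ha.le, mul_one, mul_div_cancel₀ _ ha.ne']

lemma sub_min_self_eq (a c : ℝ) : a - min a c = max (a - c) 0 := by
  rcases le_total a c with h | h
  · rw [min_eq_left h, sub_self, max_eq_right (sub_nonpos.2 h)]
  · rw [min_eq_right h, max_eq_left (sub_nonneg.2 h)]

lemma sum_max_zero_le_card_mul {ι : Type*} [Fintype ι] {s : ι → ℝ} {h : ℝ} (h0 : 0 ≤ h)
    (hs : ∀ i, |s i| ≤ h) : ∑ i, max (s i) 0 ≤ Fintype.card ι * h := by
  calc ∑ i, max (s i) 0 ≤ ∑ _i : ι, h :=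
        sum_le_sum fun i _ => max_le ((le_abs_self _).trans (hs i)) h0
    _ = Fintype.card ι * h := by rw [sum_const, card_univ, nsmul_eq_mul]

section CapRows

variable {ι κ : Type*} [Fintype κ]

noncomputable def capRows (f : ι → κ → ℝ) (μ : ι → ℝ) : ι → κ → ℝ :=
  fun i j => f i j * min 1 (μ i / ∑ j, f i j)

variable {f : ι → κ → ℝ} {μ : ι → ℝ}

lemma capRows_nonneg (hf : ∀ i j, 0 ≤ f i j) (hμ : ∀ i, 0 ≤ μ i) (i : ι) (j : κ) :
    0 ≤ capRows f μ i j :=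
  mul_nonneg (hf i j) (le_min zero_le_one (div_nonneg (hμ i) (sum_nonneg fun j _ => hf i j)))

lemma capRows_le (hf : ∀ i j, 0 ≤ f i j) (i : ι) (j : κ) : capRows f μ i j ≤ f i j :=
  mul_le_of_le_one_right (hf i j) (min_le_left _ _)

lemma sum_capRows (hf : ∀ i j, 0 ≤ f i j) (hμ : ∀ i, 0 ≤ μ i) (i : ι) :
    ∑ j, capRows f μ i j = min (∑ j, f i j) (μ i) := by
  simp only [capRows, ← sum_mul]
  exact mul_min_one_div_self (sum_nonneg fun j _ => hf i j) (hμ i)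

lemma sum_sub_capRows (hf : ∀ i j, 0 ≤ f i j) (hμ : ∀ i, 0 ≤ μ i) (i : ι) :
    ∑ j, (f i j - capRows f μ i j) = max (∑ j, f i j - μ i) 0 := by
  rw [sum_sub_distrib, sum_capRows hf hμ, sub_min_self_eq]

end CapRows

section ProductCoupling

variable {ι κ : Type*} [Fintype ι] [Fintype κ]

lemma sum_mul_div_sum_eq_left {d : ι → ℝ} {e : κ → ℝ} (hd : ∀ i, 0 ≤ d i)
    (hde : ∑ i, d i = ∑ j, e j) (i : ι) : ∑ j, d i * e j / ∑ i, d i = d i := by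
  rw [← sum_div, ← mul_sum, ← hde]
  exact mul_div_cancel_of_imp fun h =>
    (sum_eq_zero_iff_of_nonneg fun i _ => hd i).1 h i (mem_univ i)

lemma sum_mul_div_sum_eq_right {d : ι → ℝ} {e : κ → ℝ} (he : ∀ j, 0 ≤ e j)
    (hde : ∑ i, d i = ∑ j, e j) (j : κ) : ∑ i, d i * e j / ∑ i, d i = e j := by
  rw [← sum_div, ← sum_mul]
  refine mul_div_cancel_left_of_imp fun h => ?_
  rw [hde] at h
  exact (sum_eq_zero_iff_of_nonneg fun j _ => he j).1 h j (mem_univ j)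

end ProductCoupling

section Rounding

variable {ι κ : Type*} [Fintype ι] [Fintype κ]

noncomputable def capMarginals (f : ι → κ → ℝ) (μ : ι → ℝ) (ν : κ → ℝ) : ι → κ → ℝ :=
  fun i j => capRows (fun j i => capRows f μ i j) ν j i

variable {f g : ι → κ → ℝ} {μ : ι → ℝ} {ν : κ → ℝ}

lemma capMarginals_nonneg (hf : ∀ i j, 0 ≤ f i j) (hμ : ∀ i, 0 ≤ μ i) (hν : ∀ j, 0 ≤ ν j)
    (i : ι) (j : κ) : 0 ≤ capMarginals f μ ν i j :=
  capRows_nonneg (fun j i => capRows_nonneg hf hμ i j) hν j i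

lemma capMarginals_le_capRows (hf : ∀ i j, 0 ≤ f i j) (hμ : ∀ i, 0 ≤ μ i) (i : ι) (j : κ) :
    capMarginals f μ ν i j ≤ capRows f μ i j :=
  capRows_le (fun j i => capRows_nonneg hf hμ i j) j i

lemma sum_capMarginals_le_left (hf : ∀ i j, 0 ≤ f i j) (hμ : ∀ i, 0 ≤ μ i) (i : ι) :
    ∑ j, capMarginals f μ ν i j ≤ μ i :=
  calc ∑ j, capMarginals f μ ν i j ≤ ∑ j, capRows f μ i j :=
        sum_le_sum fun j _ => capMarginals_le_capRows hf hμ i j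
    _ ≤ μ i := (sum_capRows hf hμ i).trans_le (min_le_right _ _)

lemma sum_capMarginals_le_right (hf : ∀ i j, 0 ≤ f i j) (hμ : ∀ i, 0 ≤ μ i)
    (hν : ∀ j, 0 ≤ ν j) (j : κ) : ∑ i, capMarginals f μ ν i j ≤ ν j :=
  (sum_capRows (fun j i => capRows_nonneg hf hμ i j) hν j).trans_le (min_le_right _ _)

lemma sum_sum_sub_capMarginals_le (hf : ∀ i j, 0 ≤ f i j) (hμ : ∀ i, 0 ≤ μ i)
    (hν : ∀ j, 0 ≤ ν j) :
    ∑ i, ∑ j, (f i j - capMarginals f μ ν i j) ≤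
      ∑ i, max (∑ j, f i j - μ i) 0 + ∑ j, max (∑ i, f i j - ν j) 0 := by
  have hcap : ∀ i j, 0 ≤ capRows f μ i j := capRows_nonneg hf hμ
  have hrows : ∑ i, ∑ j, (f i j - capRows f μ i j) = ∑ i, max (∑ j, f i j - μ i) 0 :=
    sum_congr rfl fun i _ => sum_sub_capRows hf hμ i
  have hcols : ∑ i, ∑ j, (capRows f μ i j - capMarginals f μ ν i j) ≤
      ∑ j, max (∑ i, f i j - ν j) 0 := by
    rw [sum_comm]
    exact sum_le_sum fun j _ => (sum_sub_capRows (fun j i => hcap i j) hν j).trans_le <|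
      max_le_max_right 0 (sub_le_sub_right (sum_le_sum fun i _ => capRows_le hf i j) _)
  calc ∑ i, ∑ j, (f i j - capMarginals f μ ν i j)
      = ∑ i, ∑ j, (f i j - capRows f μ i j) +
          ∑ i, ∑ j, (capRows f μ i j - capMarginals f μ ν i j) := by
        simp only [← sum_add_distrib, sub_add_sub_cancel]
    _ ≤ _ := by rw [hrows]; gcongr

noncomputable def fillDeficits (g : ι → κ → ℝ) (μ : ι → ℝ) (ν : κ → ℝ) : ι → κ → ℝ :=
  fun i j => g i j + (μ i - ∑ j, g i j) * (ν j - ∑ i, g i j) / ∑ i, (μ i - ∑ j, g i j)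

lemma sum_deficit_left_eq_right (hμν : ∑ i, μ i = ∑ j, ν j) :
    ∑ i, (μ i - ∑ j, g i j) = ∑ j, (ν j - ∑ i, g i j) := by
  rw [sum_sub_distrib, sum_sub_distrib, hμν, sum_comm]

lemma le_fillDeficits (hrow : ∀ i, ∑ j, g i j ≤ μ i) (hcol : ∀ j, ∑ i, g i j ≤ ν j)
    (i : ι) (j : κ) : g i j ≤ fillDeficits g μ ν i j :=
  le_add_of_nonneg_right <|
    div_nonneg (mul_nonneg (sub_nonneg.2 (hrow i)) (sub_nonneg.2 (hcol j)))
      (sum_nonneg fun i _ => sub_nonneg.2 (hrow i))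

lemma sum_fillDeficits_left (hrow : ∀ i, ∑ j, g i j ≤ μ i) (hμν : ∑ i, μ i = ∑ j, ν j)
    (i : ι) : ∑ j, fillDeficits g μ ν i j = μ i := by
  simp only [fillDeficits, sum_add_distrib]
  rw [sum_mul_div_sum_eq_left (fun i => sub_nonneg.2 (hrow i)) (sum_deficit_left_eq_right hμν)]
  ring

lemma sum_fillDeficits_right (hcol : ∀ j, ∑ i, g i j ≤ ν j) (hμν : ∑ i, μ i = ∑ j, ν j)
    (j : κ) : ∑ i, fillDeficits g μ ν i j = ν j := by
  simp only [fillDeficits, sum_add_distrib]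
  rw [sum_mul_div_sum_eq_right (fun j => sub_nonneg.2 (hcol j)) (sum_deficit_left_eq_right hμν)]
  ring

theorem exists_coupling_sum_abs_sub_le (hf : ∀ i j, 0 ≤ f i j) (hμ : ∀ i, 0 ≤ μ i)
    (hν : ∀ j, 0 ≤ ν j) (hμν : ∑ i, μ i = ∑ j, ν j) :
    ∃ F : ι → κ → ℝ, (∀ i j, 0 ≤ F i j) ∧ (∀ i, ∑ j, F i j = μ i) ∧
      (∀ j, ∑ i, F i j = ν j) ∧
      ∑ i, ∑ j, |f i j - F i j| ≤
        2 * (∑ i, max (∑ j, f i j - μ i) 0 + ∑ j, max (∑ i, f i j - ν j) 0) +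
          (∑ i, μ i - ∑ i, ∑ j, f i j) := by
  set g := capMarginals f μ ν
  have hrow : ∀ i, ∑ j, g i j ≤ μ i := sum_capMarginals_le_left hf hμ
  have hcol : ∀ j, ∑ i, g i j ≤ ν j := sum_capMarginals_le_right hf hμ hν
  have hgf : ∀ i j, g i j ≤ f i j := fun i j =>
    (capMarginals_le_capRows hf hμ i j).trans (capRows_le hf i j)
  have hgF := le_fillDeficits hrow hcol
  have hFrow := sum_fillDeficits_left hrow hμν
  refine ⟨fillDeficits g μ ν, fun i j => (capMarginals_nonneg hf hμ hν i j).trans (hgF i j),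
    hFrow, sum_fillDeficits_right hcol hμν, ?_⟩
  calc ∑ i, ∑ j, |f i j - fillDeficits g μ ν i j|
      ≤ ∑ i, ∑ j, ((f i j - g i j) + (fillDeficits g μ ν i j - g i j)) := by
        gcongr with i _ j _
        rw [abs_sub_le_iff]
        constructor <;> linarith [hgf i j, hgF i j]
    _ = 2 * ∑ i, ∑ j, (f i j - g i j) + (∑ i, μ i - ∑ i, ∑ j, f i j) := by
        have hF : ∑ i, ∑ j, fillDeficits g μ ν i j = ∑ i, μ i :=
          sum_congr rfl fun i _ => hFrow i
        simp only [sum_add_distrib, sum_sub_distrib] at hF ⊢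
        linarith
    _ ≤ _ := by gcongr; exact sum_sum_sub_capMarginals_le hf hμ hν

end Rounding

lemma dist_le_sum_sum_abs {ι κ : Type*} [Fintype ι] [Fintype κ]
    (x y : EuclideanSpace ℝ (ι × κ)) : dist x y ≤ ∑ i, ∑ j, |x (i, j) - y (i, j)| := by
  rw [dist_eq_norm, ← Fintype.sum_prod_type']
  exact EuclideanSpace.norm_le_sum_norm _

section Residual

variable {m n : ℕ} {μ : Fin m → ℝ} {ν : Fin n → ℝ} (π : EuclideanSpace ℝ (Fin m × Fin n))

lemma abs_one_sub_sum_le_hFun : |1 - ∑ i, ∑ j, π (i, j)| ≤ hFun m n μ ν π :=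
  le_max_left _ _

lemma hFun_nonneg : 0 ≤ hFun m n μ ν π :=
  (abs_nonneg _).trans (abs_one_sub_sum_le_hFun π)

lemma abs_sum_sub_left_le_hFun (i : Fin m) : |∑ j, π (i, j) - μ i| ≤ hFun m n μ ν π :=
  (le_ciSup (f := fun i => |∑ j, π (i, j) - μ i|) (Set.finite_range _).bddAbove i).trans
    ((le_max_left _ _).trans (le_max_right _ _))

lemma abs_sum_sub_right_le_hFun (j : Fin n) : |∑ i, π (i, j) - ν j| ≤ hFun m n μ ν π :=
  (le_ciSup (f := fun j => |∑ i, π (i, j) - ν j|) (Set.finite_range _).bddAbove j).trans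
    ((le_max_right _ _).trans (le_max_right _ _))

end Residual

theorem stmt10_general (m n : ℕ)
    (μ : Fin m → ℝ) (ν : Fin n → ℝ) (hμ : IsProbVec μ) (hν : IsProbVec ν) :
    ∃ B : ℝ, 0 < B ∧
      ∀ π₀ ∈ deltaSet m n,
        Metric.infDist π₀ (transportSet m n μ ν) ≤ B * hFun m n μ ν π₀ := by
  refine ⟨2 * (m + n) + 1, by positivity, fun π₀ hπ₀ => ?_⟩
  obtain ⟨F, hF0, hFrow, hFcol, hFf⟩ :=
    exists_coupling_sum_abs_sub_le (f := fun i j => π₀ (i, j)) hπ₀.1 hμ.1 hν.1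
      (hμ.2.trans hν.2.symm)
  have h0 := hFun_nonneg (μ := μ) (ν := ν) π₀
  have hrow := sum_max_zero_le_card_mul h0 (abs_sum_sub_left_le_hFun π₀)
  have hcol := sum_max_zero_le_card_mul h0 (abs_sum_sub_right_le_hFun π₀)
  have hmass := (le_abs_self _).trans (abs_one_sub_sum_le_hFun (μ := μ) (ν := ν) π₀)
  rw [Fintype.card_fin] at hrow hcol
  rw [hμ.2] at hFf
  calc Metric.infDist π₀ (transportSet m n μ ν)
      ≤ dist π₀ (WithLp.toLp 2 fun p => F p.1 p.2) :=
        Metric.infDist_le_dist_of_mem ⟨hF0, hFrow, hFcol⟩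
    _ ≤ ∑ i, ∑ j, |π₀ (i, j) - F i j| := dist_le_sum_sum_abs _ _
    _ ≤ (2 * (m + n) + 1) * hFun m n μ ν π₀ := by linarith

/-- There is a constant `B > 0` (depending only on `m, n, μ, ν`) such
that `dist(π₀, Π(μ,ν)) ≤ B·h(π₀)` for every `π₀ ∈ Δ_{mn}`. -/
theorem stmt10 (m n : ℕ) (hm : 0 < m) (hn : 0 < n)
    (μ : Fin m → ℝ) (ν : Fin n → ℝ) (hμ : IsProbVec μ) (hν : IsProbVec ν) :
    ∃ B : ℝ, 0 < B ∧
      ∀ π₀ ∈ deltaSet m n,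
        Metric.infDist π₀ (transportSet m n μ ν) ≤ B * hFun m n μ ν π₀ :=
  stmt10_general m n μ ν hμ hν
end
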